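/- arXiv:2108.09857 — 3 statements merged into one kernel-verified Lean document; each statement's English description precedes it below -/
import Mathlib

section
/- Let K be a field of characteristic 0, let γ₁, …, γ_k ∈ K^× satisfy [K(√γ₁, …, √γ_k) : K] = 2^k, and let γ ∈ K^× be an element that is not a square in K. Then there exists an index j ∈ {1, …, k} such that, writing the k elements obtained from γ₁, …, γ_k by replacing γ_j with γ, one has [K(√γ, √γ_i (i ≠ j)) : K] = 2^k. -/
/-!
Let `L = K(√γ₁, …, √γ_k)` and `F_j = K(√γ_i : i ≠ j)`. Each square root at most doubles the
degree, so `[L : K] = 2^k` forces `[F_j : K] = 2^(k-1)` and `√γ_j ∉ F_j`; it therefore suffices to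
find `j` with `√γ ∉ F_j`. If `√γ ∉ L`, any `j` works. Otherwise adjoin the `√γ_i` one at a time:
if `y ∈ F(√a)` and `y² ∈ F`, then writing `y = p + q√a` gives `2pq√a ∈ F`, so `y ∈ F` or
`y√a ∈ F`. This yields `j` with `√γ · √γ_j ∈ F_j`, and then `√γ ∉ F_j`.
-/

open IntermediateField Module Polynomial

theorem Set.range_update_eq_insert_image_compl {α β : Type*} [DecidableEq α] (f : α → β) (a : α)
    (b : β) :
    Set.range (Function.update f a b) = insert b (f '' {a}ᶜ) := by
  rw [← Set.image_univ, ← Set.union_compl_self {a}, Set.image_union, Set.image_singleton,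
    Function.update_self, ← Set.insert_eq]
  congr 1
  exact Set.image_congr fun i hi => Function.update_of_ne hi b f

namespace IntermediateField

variable {K Ω : Type*} [Field K] [Field Ω] [Algebra K Ω]

theorem mem_bot_iff_mem {F : IntermediateField K Ω} {x : Ω} :
    x ∈ (⊥ : IntermediateField F Ω) ↔ x ∈ F := by
  rw [mem_bot]
  exact ⟨fun ⟨y, hy⟩ => hy ▸ y.2, fun h => ⟨⟨x, h⟩, rfl⟩⟩

theorem isIntegral_of_sq_mem (F : IntermediateField K Ω) {a : Ω} (ha : a ^ 2 ∈ F) :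
    IsIntegral F a :=
  ⟨X ^ 2 - C ⟨a ^ 2, ha⟩, monic_X_pow_sub_C _ two_ne_zero, by simp [algebraMap_apply]⟩

theorem finrank_adjoin_simple_le_two_of_sq_mem (F : IntermediateField K Ω) {a : Ω}
    (ha : a ^ 2 ∈ F) : finrank F F⟮a⟯ ≤ 2 := by
  rw [adjoin.finrank (isIntegral_of_sq_mem F ha)]
  refine (natDegree_le_of_dvd (minpoly.dvd F a (p := X ^ 2 - C ⟨a ^ 2, ha⟩) ?_)
    (monic_X_pow_sub_C _ two_ne_zero).ne_zero).trans_eq (natDegree_X_pow_sub_C)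
  simp [algebraMap_apply]

theorem finrank_adjoin_simple_eq_two_of_sq_mem (F : IntermediateField K Ω) {a : Ω}
    (ha : a ^ 2 ∈ F) (ha' : a ∉ F) : finrank F F⟮a⟯ = 2 := by
  have : FiniteDimensional F F⟮a⟯ := adjoin.finiteDimensional (isIntegral_of_sq_mem F ha)
  have h0 : finrank F F⟮a⟯ ≠ 0 := finrank_pos.ne'
  have h1 : finrank F F⟮a⟯ ≠ 1 := by
    rwa [Ne, finrank_adjoin_simple_eq_one_iff, mem_bot_iff_mem]
  have := finrank_adjoin_simple_le_two_of_sq_mem F ha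
  omega

theorem exists_eq_add_mul_of_mem_adjoin_simple (F : IntermediateField K Ω) {a y : Ω}
    (ha : a ^ 2 ∈ F) (hy : y ∈ F⟮a⟯) : ∃ p ∈ F, ∃ q ∈ F, y = p + q * a := by
  rw [← mem_toSubalgebra,
    adjoin_simple_toSubalgebra_of_isAlgebraic (isIntegral_of_sq_mem F ha).isAlgebraic] at hy
  induction hy using Algebra.adjoin_induction with
  | mem x hx => exact ⟨0, zero_mem F, 1, one_mem F, by rw [Set.mem_singleton_iff.mp hx]; ring⟩
  | algebraMap r => exact ⟨r, r.2, 0, zero_mem F, by simp [algebraMap_apply]⟩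
  | add x y _ _ hx hy =>
    obtain ⟨p, hp, q, hq, rfl⟩ := hx
    obtain ⟨p', hp', q', hq', rfl⟩ := hy
    exact ⟨p + p', add_mem hp hp', q + q', add_mem hq hq', by ring⟩
  | mul x y _ _ hx hy =>
    obtain ⟨p, hp, q, hq, rfl⟩ := hx
    obtain ⟨p', hp', q', hq', rfl⟩ := hy
    refine ⟨p * p' + q * q' * a ^ 2, add_mem (mul_mem hp hp') (mul_mem (mul_mem hq hq') ha),
      p * q' + q * p', add_mem (mul_mem hp hq') (mul_mem hq hp'), by ring⟩

theorem mem_or_mul_mem_of_mem_adjoin_simple [NeZero (2 : Ω)] (F : IntermediateField K Ω)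
    {a y : Ω} (ha : a ^ 2 ∈ F) (hy : y ∈ F⟮a⟯) (hy2 : y ^ 2 ∈ F) : y ∈ F ∨ y * a ∈ F := by
  by_cases haF : a ∈ F
  · rw [adjoin_simple_eq_bot_iff.mpr (mem_bot_iff_mem.mpr haF)] at hy
    exact Or.inl (mem_bot_iff_mem.mp hy)
  obtain ⟨p, hp, q, hq, rfl⟩ := exists_eq_add_mul_of_mem_adjoin_simple F ha hy
  have hpqa : 2 * p * q * a ∈ F := by
    have : 2 * p * q * a = (p + q * a) ^ 2 - p ^ 2 - q ^ 2 * a ^ 2 := by ring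
    rw [this]
    exact sub_mem (sub_mem hy2 (pow_mem hp 2)) (mul_mem (pow_mem hq 2) ha)
  rcases eq_or_ne p 0 with rfl | hp0
  · exact Or.inr (by simpa [mul_assoc, ← sq] using mul_mem hq ha)
  rcases eq_or_ne q 0 with rfl | hq0
  · exact Or.inl (by simpa using hp)
  refine absurd ?_ haF
  have h2pq : 2 * p * q ∈ F := mul_mem (mul_mem (ofNat_mem F 2) hp) hq
  have h2pq0 : 2 * p * q ≠ 0 := mul_ne_zero (mul_ne_zero two_ne_zero hp0) hq0
  rw [show a = (2 * p * q)⁻¹ * (2 * p * q * a) by field_simp]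
  exact mul_mem (inv_mem h2pq) hpqa

theorem adjoin_insert_eq_restrictScalars_adjoin_simple (S : Set Ω) (x : Ω) :
    adjoin K (insert x S) = (adjoin K S)⟮x⟯.restrictScalars K := by
  rw [Set.insert_eq, Set.union_comm, adjoin_adjoin_left]

theorem finrank_adjoin_insert (S : Set Ω) (x : Ω) :
    finrank K (adjoin K (insert x S)) =
      finrank K (adjoin K S) * finrank (adjoin K S) (adjoin K S)⟮x⟯ := by
  rw [adjoin_insert_eq_restrictScalars_adjoin_simple]
  exact (finrank_mul_finrank K (adjoin K S) (adjoin K S)⟮x⟯).symm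

section SquareRoots

variable {ι : Type*} {s : ι → Ω} (hs : ∀ i, s i ^ 2 ∈ (⊥ : IntermediateField K Ω))
include hs

theorem finrank_adjoin_image_le_two_pow (S : Finset ι) :
    finrank K (adjoin K (s '' S)) ≤ 2 ^ S.card := by
  classical
  induction S using Finset.induction_on with
  | empty =>
    rw [Finset.coe_empty, Set.image_empty, adjoin_empty, IntermediateField.finrank_bot]
    exact Nat.one_le_two_pow
  | insert a T ha ih =>
    set F := adjoin K (s '' T)
    rw [Finset.coe_insert, Set.image_insert_eq, finrank_adjoin_insert,
      Finset.card_insert_of_notMem ha, pow_succ]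
    exact Nat.mul_le_mul ih (finrank_adjoin_simple_le_two_of_sq_mem F (bot_le (a := F) (hs a)))

theorem mem_bot_or_exists_mul_mem_adjoin_image_erase [NeZero (2 : Ω)] [DecidableEq ι]
    {x : Ω} (hx : x ^ 2 ∈ (⊥ : IntermediateField K Ω)) (S : Finset ι)
    (hxS : x ∈ adjoin K (s '' S)) :
    x ∈ (⊥ : IntermediateField K Ω) ∨ ∃ j ∈ S, x * s j ∈ adjoin K (s '' (S.erase j)) := by
  induction S using Finset.induction_on with
  | empty => simpa using hxS
  | insert a T ha ih =>
    set F := adjoin K (s '' T)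
    rw [Finset.coe_insert, Set.image_insert_eq,
      adjoin_insert_eq_restrictScalars_adjoin_simple] at hxS
    rcases mem_or_mul_mem_of_mem_adjoin_simple F (bot_le (a := F) (hs a)) hxS
      (bot_le (a := F) hx) with hxT | hxa
    · refine (ih hxT).imp_right fun ⟨j, hjT, hj⟩ => ⟨j, Finset.mem_insert_of_mem hjT, ?_⟩
      exact adjoin.mono _ _ _ (Set.image_mono (Finset.coe_subset.mpr
        (Finset.erase_subset_erase j (Finset.subset_insert a T)))) hj
    · exact Or.inr ⟨a, Finset.mem_insert_self a T, by rwa [Finset.erase_insert ha]⟩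

theorem finrank_adjoin_image_compl_singleton [Fintype ι] [DecidableEq ι]
    (hL : finrank K (adjoin K (Set.range s)) = 2 ^ Fintype.card ι) (j : ι) :
    finrank K (adjoin K (s '' {j}ᶜ)) = 2 ^ (Fintype.card ι - 1) ∧
      s j ∉ adjoin K (s '' {j}ᶜ) := by
  set F := adjoin K (s '' {j}ᶜ)
  have hcard : Fintype.card ι = Fintype.card ι - 1 + 1 :=
    (Nat.succ_pred_eq_of_pos (Fintype.card_pos_iff.mpr ⟨j⟩)).symm
  have hF : finrank K F ≤ 2 ^ (Fintype.card ι - 1) := by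
    have := finrank_adjoin_image_le_two_pow hs ({j}ᶜ : Finset ι)
    rwa [Finset.coe_compl, Finset.coe_singleton, Finset.card_compl, Finset.card_singleton] at this
  have hFj : finrank F F⟮s j⟯ ≤ 2 :=
    finrank_adjoin_simple_le_two_of_sq_mem F (bot_le (a := F) (hs j))
  have htower : finrank K F * finrank F F⟮s j⟯ = 2 ^ (Fintype.card ι - 1) * 2 := by
    rw [← finrank_adjoin_insert, ← Set.image_insert_eq, Set.insert_eq, Set.union_compl_self,
      Set.image_univ, hL, ← pow_succ, ← hcard]
  have hFeq : finrank K F = 2 ^ (Fintype.card ι - 1) := by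
    have := Nat.mul_le_mul_left (finrank K F) hFj
    omega
  refine ⟨hFeq, fun hjF => ?_⟩
  have hFj1 : finrank F F⟮s j⟯ = 1 :=
    finrank_adjoin_simple_eq_one_iff.mpr (mem_bot_iff_mem.mpr hjF)
  rw [hFeq, hFj1] at htower
  have : 0 < 2 ^ (Fintype.card ι - 1) := by positivity
  omega

theorem exists_notMem_adjoin_image_compl_singleton [NeZero (2 : Ω)] [Fintype ι] [Nonempty ι]
    [DecidableEq ι]
    (hL : finrank K (adjoin K (Set.range s)) = 2 ^ Fintype.card ι)
    {x : Ω} (hx : x ^ 2 ∈ (⊥ : IntermediateField K Ω))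
    (hxK : x ∉ (⊥ : IntermediateField K Ω)) :
    ∃ j, x ∉ adjoin K (s '' {j}ᶜ) := by
  by_cases hxL : x ∈ adjoin K (Set.range s)
  · rw [← Set.image_univ, ← Finset.coe_univ] at hxL
    obtain ⟨j, -, hj⟩ :=
      (mem_bot_or_exists_mul_mem_adjoin_image_erase hs hx _ hxL).resolve_left hxK
    rw [Finset.coe_erase, Finset.coe_univ, ← Set.compl_eq_univ_sdiff] at hj
    refine ⟨j, fun hxj => (finrank_adjoin_image_compl_singleton hs hL j).2 ?_⟩
    have hx0 : x ≠ 0 := by rintro rfl; exact hxK (zero_mem _)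
    simpa [hx0] using mul_mem (inv_mem hxj) hj
  · exact ⟨Classical.arbitrary ι, fun h => hxL (adjoin.mono _ _ _ (Set.image_subset_range _ _) h)⟩

end SquareRoots

end IntermediateField

theorem kummer_swap_general {K : Type*} [Field K] [CharZero K] {k : ℕ} (hk : 0 < k)
    (γs : Fin k → K)
    (hdeg : ∃ s : Fin k → AlgebraicClosure K,
      (∀ i, s i ^ 2 = algebraMap K (AlgebraicClosure K) (γs i)) ∧
      Module.finrank K (IntermediateField.adjoin K (Set.range s)) = 2 ^ k)
    (γ : K) (hγ : ¬ ∃ y : K, y ^ 2 = γ) :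
    ∃ j : Fin k, ∃ t : Fin k → AlgebraicClosure K,
      t j ^ 2 = algebraMap K (AlgebraicClosure K) γ ∧
      (∀ i, i ≠ j → t i ^ 2 = algebraMap K (AlgebraicClosure K) (γs i)) ∧
      Module.finrank K (IntermediateField.adjoin K (Set.range t)) = 2 ^ k := by
  obtain ⟨s, hs, hL⟩ := hdeg
  obtain ⟨x, hx⟩ := IsAlgClosed.exists_pow_nat_eq (algebraMap K (AlgebraicClosure K) γ) two_pos
  have hsK : ∀ i, s i ^ 2 ∈ (⊥ : IntermediateField K (AlgebraicClosure K)) :=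
    fun i => mem_bot.mpr ⟨γs i, (hs i).symm⟩
  have hxK : x ∉ (⊥ : IntermediateField K (AlgebraicClosure K)) := by
    intro hxbot
    obtain ⟨y, hy⟩ := mem_bot.mp hxbot
    exact hγ ⟨y, (algebraMap K (AlgebraicClosure K)).injective (by rw [map_pow, hy, hx])⟩
  replace hL : finrank K (adjoin K (Set.range s)) = 2 ^ Fintype.card (Fin k) := by
    rwa [Fintype.card_fin]
  have hxK2 : x ^ 2 ∈ (⊥ : IntermediateField K (AlgebraicClosure K)) := mem_bot.mpr ⟨γ, hx.symm⟩
  have : Nonempty (Fin k) := ⟨⟨0, hk⟩⟩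
  obtain ⟨j, hj⟩ := exists_notMem_adjoin_image_compl_singleton hsK hL hxK2 hxK
  set F := adjoin K (s '' {j}ᶜ)
  refine ⟨j, Function.update s j x, by simp [hx], fun i hi => by simp [hi, hs], ?_⟩
  rw [Set.range_update_eq_insert_image_compl, finrank_adjoin_insert,
    (finrank_adjoin_image_compl_singleton hsK hL j).1,
    finrank_adjoin_simple_eq_two_of_sq_mem F (bot_le (a := F) hxK2) hj,
    ← pow_succ, Fintype.card_fin, Nat.sub_add_cancel hk]

/-- **Lemma (Kummer theory swap).** Let `K` be a field of characteristic 0, let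
`γ₁, …, γ_k ∈ K^×` satisfy `[K(√γ₁, …, √γ_k) : K] = 2^k`, and let `γ ∈ K^×` be not a square
in `K`. Then there is an index `j` such that `[K(√γ, √γ_i (i ≠ j)) : K] = 2^k`.
Square roots are taken in a fixed algebraic closure of `K`. -/
theorem kummer_swap {K : Type*} [Field K] [CharZero K] {k : ℕ} (hk : 0 < k)
    (γs : Fin k → K) (hγs0 : ∀ i, γs i ≠ 0)
    (hdeg : ∃ s : Fin k → AlgebraicClosure K,
      (∀ i, s i ^ 2 = algebraMap K (AlgebraicClosure K) (γs i)) ∧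
      Module.finrank K (IntermediateField.adjoin K (Set.range s)) = 2 ^ k)
    (γ : K) (hγ0 : γ ≠ 0) (hγ : ¬ ∃ y : K, y ^ 2 = γ) :
    ∃ j : Fin k, ∃ t : Fin k → AlgebraicClosure K,
      t j ^ 2 = algebraMap K (AlgebraicClosure K) γ ∧
      (∀ i, i ≠ j → t i ^ 2 = algebraMap K (AlgebraicClosure K) (γs i)) ∧
      Module.finrank K (IntermediateField.adjoin K (Set.range t)) = 2 ^ k :=
  kummer_swap_general hk γs hdeg γ hγ
end

section
/- Let γ be an algebraic number and n a positive integer. Then |h(Φ_n(γ)) − φ(n)·h(γ)| ≤ 2^{ω(n)}·log(π·n), where Φ_n is the n-th cyclotomic polynomial, φ is Euler's totient function and ω(n) is the number of distinct prime divisors of n. -/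
/-!
At a finite place `v`, `Φ_n` is monic of degree `φ(n)` with integral coefficients, so
`|Φ_n(γ)|_v = |γ|_v ^ φ(n)` when `|γ|_v > 1` and `|Φ_n(γ)|_v ≤ 1` otherwise: the finite parts of
`h(Φ_n(γ))` and `φ(n) h(γ)` agree exactly.

At an archimedean place, Möbius inversion of `∏_{d ∣ m} Φ_d(z) = z^m - 1` gives, for `|z| > 1`,
`log |Φ_n(z)| - φ(n) log |z| = ∑_{de = n} μ(d) log |1 - z^{-e}|`, a sum with `2^ω(n)` nonzero
terms, each at most `max (log 2) (log (1 + 1 / c))` once `|z| ≥ 1 + c`. Taking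
`c = 2^ω(n) / φ(n)` settles `|z| ≥ 1 + c`; for `|z| < 1 + c` the maximum modulus principle on the
circle `|z| = 1 + c` bounds `|Φ_n(z)|`. For `n = 1` the triangle inequality suffices.
-/

open NumberField IsDedekindDomain Module Polynomial
open scoped Classical

/-- The `𝔭`-adic valuation `ν_𝔭` on a number field `K`, as an integer
(with the convention `ν_𝔭(0) = 0`). -/
noncomputable def nuP {K : Type*} [Field K] [NumberField K]
    (v : HeightOneSpectrum (𝓞 K)) (x : K) : ℤ :=
  if hx : x = 0 then 0
  else -Multiplicative.toAdd (WithZero.unzero ((v.valuation K).ne_zero_iff.mpr hx))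

/-- The absolute logarithmic Weil height of an element of a number field `K`. -/
noncomputable def logHeight {K : Type*} [Field K] [NumberField K] (x : K) : ℝ :=
  (Module.finrank ℚ K : ℝ)⁻¹ *
    ((∑ σ : K →+* ℂ, Real.log (max 1 (‖σ x‖))) +
     ∑ᶠ v : HeightOneSpectrum (𝓞 K),
       ((max 0 (-(nuP v x)) : ℤ) : ℝ) * Real.log (Ideal.absNorm v.asIdeal))

open Finset Real
open scoped ArithmeticFunction.Moebius Nat

theorem Nat.card_divisors_filter_squarefree {n : ℕ} (hn : n ≠ 0) :
    #{d ∈ n.divisors | Squarefree d} = 2 ^ #n.primeFactors := by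
  rw [card_eq_sum_ones, Nat.sum_divisors_filter_squarefree hn, sum_const, smul_eq_mul, mul_one,
    card_powerset, Nat.factors_eq]
  rfl

theorem sum_abs_moebius_divisorsAntidiagonal {n : ℕ} (hn : n ≠ 0) :
    ∑ x ∈ n.divisorsAntidiagonal, |(μ x.1 : ℝ)| = 2 ^ #n.primeFactors := by
  rw [Nat.sum_divisorsAntidiagonal (fun d _ ↦ |(μ d : ℝ)|)]
  simp only [← Int.cast_abs, ArithmeticFunction.abs_moebius, apply_ite (Int.cast : ℤ → ℝ),
    Int.cast_one, Int.cast_zero, sum_boole, Nat.card_divisors_filter_squarefree hn, Nat.cast_pow,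
    Nat.cast_ofNat]

theorem abs_log_sub_log_le {a b c : ℝ} (hc : 0 < c) (hca : 1 + c ≤ a) (hab : |b - a| ≤ 1) :
    |log b - log a| ≤ max (log 2) (log (1 + 1 / c)) := by
  obtain ⟨hba, hab'⟩ := abs_le.mp hab
  have ha : 0 < a := by linarith
  have hb : 0 < b := by linarith
  rw [← log_div hb.ne' ha.ne', abs_le]
  constructor
  · have hlow : c / (1 + c) ≤ b / a := by
      rw [div_le_div_iff₀ (by linarith) ha]
      nlinarith
    have := log_le_log (by positivity) hlow
    rw [show c / (1 + c) = (1 + 1 / c)⁻¹ by field_simp; ring, log_inv] at this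
    linarith [le_max_right (log 2) (log (1 + 1 / c))]
  · refine le_max_of_le_left (log_le_log (div_pos hb ha) ?_)
    rw [div_le_iff₀ ha]
    linarith

theorem abs_posLog_sub_le_abs_log_sub {a b : ℝ} (hb : 0 ≤ b) : |log⁺ a - b| ≤ |log a - b| := by
  rw [posLog_apply]
  rcases le_total 0 (log a) with h | h
  · rw [max_eq_right h]
  · rw [max_eq_left h, zero_sub, abs_neg, abs_of_nonneg hb, abs_of_nonpos (by linarith)]
    linarith

section NormedField

variable {𝕜 : Type*} [NormedField 𝕜]

theorem log_norm_cyclotomic_eval_sub {z : 𝕜} (hz : ∀ m, 0 < m → z ^ m ≠ 1) {n : ℕ} (hn : 0 < n) :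
    log ‖(cyclotomic n 𝕜).eval z‖ - φ n * log ‖z‖ =
      ∑ x ∈ n.divisorsAntidiagonal, μ x.1 • (log ‖z ^ x.2 - 1‖ - x.2 * log ‖z‖) := by
  -- the sum over `d ∣ m` of the left-hand side is the logarithm of `∏_{d ∣ m} Φ_d(z) = z^m - 1`
  refine ((ArithmeticFunction.sum_eq_iff_sum_smul_moebius_eq
    (f := fun i ↦ log ‖(cyclotomic i 𝕜).eval z‖ - φ i * log ‖z‖)
    (g := fun m ↦ log ‖z ^ m - 1‖ - m * log ‖z‖)).mp (fun m hm ↦ ?_) n hn).symm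
  have hprod : ∏ i ∈ m.divisors, (cyclotomic i 𝕜).eval z = z ^ m - 1 := by
    simpa [eval_prod] using congrArg (eval z) (prod_cyclotomic_eq_X_pow_sub_one hm 𝕜)
  have hne := hprod ▸ sub_ne_zero.mpr (hz m hm)
  rw [sum_sub_distrib, ← sum_mul, ← Nat.cast_sum, Nat.sum_totient, ← log_prod, ← norm_prod,
    hprod]
  exact fun i hi ↦ norm_ne_zero_iff.mpr (prod_ne_zero_iff.mp hne i hi)

theorem abs_log_norm_cyclotomic_eval_sub_le {n : ℕ} (hn : 0 < n) {c : ℝ} (hc : 0 < c) {z : 𝕜}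
    (hz : 1 + c ≤ ‖z‖) :
    |log ‖(cyclotomic n 𝕜).eval z‖ - φ n * log ‖z‖| ≤
      2 ^ #n.primeFactors * max (log 2) (log (1 + 1 / c)) := by
  have hz1 : 1 ≤ ‖z‖ := by linarith
  have hpow : ∀ m, 0 < m → 1 + c ≤ ‖z ^ m‖ := fun m hm ↦ by
    rw [norm_pow]; exact hz.trans (le_self_pow₀ hz1 hm.ne')
  have hroot : ∀ m, 0 < m → z ^ m ≠ 1 := fun m hm h ↦ by
    have := hpow m hm; rw [h, norm_one] at this; linarith
  have hterm : ∀ e : ℕ, 0 < e →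
      |log ‖z ^ e - 1‖ - e * log ‖z‖| ≤ max (log 2) (log (1 + 1 / c)) := fun e he ↦ by
    rw [← log_pow, ← norm_pow]
    refine abs_log_sub_log_le hc (hpow e he) ?_
    simpa using abs_norm_sub_norm_le (z ^ e - 1) (z ^ e)
  rw [log_norm_cyclotomic_eval_sub hroot hn, ← sum_abs_moebius_divisorsAntidiagonal hn.ne',
    sum_mul]
  refine (abs_sum_le_sum_abs _ _).trans (sum_le_sum fun x hx ↦ ?_)
  rw [zsmul_eq_mul, abs_mul]
  exact mul_le_mul_of_nonneg_left
    (hterm _ (Nat.pos_of_mem_divisors (Nat.snd_mem_divisors_of_mem_antidiagonal hx)))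
    (abs_nonneg _)

theorem abs_posLog_norm_sub_one_sub_posLog_norm_le (z : 𝕜) :
    |log⁺ ‖z - 1‖ - log⁺ ‖z‖| ≤ log 2 := by
  have h₁ := posLog_norm_add_le (z - 1) 1
  have h₂ := posLog_norm_add_le z (-1)
  simp only [sub_add_cancel, norm_one, norm_neg, posLog_one, add_zero, ← sub_eq_add_neg] at h₁ h₂
  exact abs_sub_le_iff.mpr ⟨by linarith, by linarith⟩

end NormedField

theorem Polynomial.posLog_norm_eval_le_of_forall_norm_eq (p : ℂ[X]) {R B : ℝ} (hR : 0 < R)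
    (hB : 0 ≤ B) (hsphere : ∀ w : ℂ, ‖w‖ = R → log ‖p.eval w‖ ≤ B) {z : ℂ} (hz : ‖z‖ ≤ R) :
    log⁺ ‖p.eval z‖ ≤ B := by
  have hnorm : ‖p.eval z‖ ≤ exp B := by
    refine Complex.norm_le_of_forall_mem_frontier_norm_le (U := Metric.ball 0 R)
      Metric.isBounded_ball p.differentiable.diffContOnCl (fun w hw ↦ ?_) ?_
    · rw [frontier_ball 0 hR.ne', mem_sphere_zero_iff_norm] at hw
      exact (le_exp_log _).trans (exp_le_exp.mpr (hsphere w hw))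
    · rwa [closure_ball 0 hR.ne', Metric.mem_closedBall, dist_zero_right]
  have := posLog_le_posLog (norm_nonneg _) hnorm
  rwa [posLog_eq_log (x := exp B) (by rw [abs_of_pos (exp_pos B)]; exact one_le_exp hB),
    log_exp] at this

theorem one_add_max_log_le_log_pi_mul {n : ℕ} (hn : 2 ≤ n) {P t : ℝ} (hP : 2 ≤ P) (ht : 0 ≤ t)
    (htn : t ≤ n) : 1 + max (log 2) (log (1 + t / P)) ≤ log (π * n) := by
  have hn' : (2 : ℝ) ≤ n := by exact_mod_cast hn
  have he := exp_one_lt_d9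
  have hπ := pi_gt_d2
  have hlog : ∀ s, 0 < s → s * exp 1 ≤ π * n → 1 + log s ≤ log (π * n) := fun s hs h ↦ by
    have := log_le_log (by positivity) h
    rwa [log_mul hs.ne' (exp_pos 1).ne', log_exp, add_comm] at this
  have h₁ := hlog 2 two_pos (by nlinarith)
  have h₂ := hlog (1 + t / P) (by positivity) (by
    have : t / P ≤ n / 2 := div_le_div₀ (by positivity) htn two_pos hP
    nlinarith [mul_le_mul_of_nonneg_right this (exp_pos 1).le,
      mul_le_mul_of_nonneg_left he.le (by positivity : (0 : ℝ) ≤ 1 + n / 2)])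
  rw [← le_sub_iff_add_le', max_le_iff]
  constructor <;> linarith

theorem abs_posLog_norm_cyclotomic_eval_sub_le_of_two_le {n : ℕ} (hn : 2 ≤ n) (z : ℂ) :
    |log⁺ ‖(cyclotomic n ℂ).eval z‖ - φ n * log⁺ ‖z‖| ≤ 2 ^ #n.primeFactors * log (π * n) := by
  set P : ℝ := 2 ^ #n.primeFactors
  set t : ℝ := (φ n : ℝ)
  have hP : 2 ≤ P := by
    obtain ⟨p, hp⟩ := Nat.nonempty_primeFactors.mpr (by omega : 1 < n)
    simpa using pow_le_pow_right₀ one_le_two (card_pos.mpr ⟨p, hp⟩)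
  have ht : 0 < t := Nat.cast_pos.mpr (Nat.totient_pos.mpr (by omega))
  -- the threshold `1 + c` is chosen so that `t * log (1 + c) ≤ P` and `1 / c = t / P`
  have hc : 0 < P / t := by positivity
  have htc : t * log (1 + P / t) ≤ P := by
    have := mul_le_mul_of_nonneg_left (log_le_sub_one_of_pos (by linarith : 0 < 1 + P / t)) ht.le
    rwa [add_sub_cancel_left, mul_div_cancel₀ _ ht.ne'] at this
  set M := max (log 2) (log (1 + t / P))
  have hM : P * (1 + M) ≤ P * log (π * n) := by
    gcongr
    exact one_add_max_log_le_log_pi_mul hn hP ht.le (Nat.cast_le.mpr (Nat.totient_le n))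
  have hM₀ : 0 ≤ M := (log_nonneg one_le_two).trans (le_max_left _ _)
  have hlarge : ∀ w : ℂ, 1 + P / t ≤ ‖w‖ →
      |log ‖(cyclotomic n ℂ).eval w‖ - t * log ‖w‖| ≤ P * M := fun w hw ↦ by
    simpa only [one_div_div] using abs_log_norm_cyclotomic_eval_sub_le (by omega) hc hw
  rcases le_or_gt (1 + P / t) ‖z‖ with hz | hz
  · rw [posLog_eq_log (x := ‖z‖) (by rw [abs_norm]; linarith)]
    calc _ ≤ |log ‖(cyclotomic n ℂ).eval z‖ - t * log ‖z‖| :=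
          abs_posLog_sub_le_abs_log_sub (mul_nonneg ht.le (log_nonneg (by linarith)))
      _ ≤ P * M := hlarge z hz
      _ ≤ _ := by linarith
  · have hΦ : log⁺ ‖(cyclotomic n ℂ).eval z‖ ≤ P + P * M := by
      refine (cyclotomic n ℂ).posLog_norm_eval_le_of_forall_norm_eq (by linarith)
        (by positivity) (fun w hw ↦ ?_) hz.le
      have := (abs_le.mp (hlarge w hw.ge)).2
      rw [hw] at this
      linarith
    have hz' : t * log⁺ ‖z‖ ≤ P := by
      have := posLog_le_posLog (norm_nonneg z) hz.le
      rw [posLog_eq_log (x := 1 + P / t) (by rw [abs_of_pos (by linarith)]; linarith)] at this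
      nlinarith
    have := posLog_nonneg (x := ‖(cyclotomic n ℂ).eval z‖)
    have := mul_nonneg ht.le (posLog_nonneg (x := ‖z‖))
    rw [abs_sub_le_iff]
    constructor <;> nlinarith

theorem abs_posLog_norm_cyclotomic_eval_sub_le {n : ℕ} (hn : 0 < n) (z : ℂ) :
    |log⁺ ‖(cyclotomic n ℂ).eval z‖ - φ n * log⁺ ‖z‖| ≤ 2 ^ #n.primeFactors * log (π * n) := by
  obtain rfl | hn := (Nat.one_le_iff_ne_zero.mpr hn.ne').eq_or_lt
  · have := log_le_log two_pos (by linarith [pi_gt_three] : (2 : ℝ) ≤ π)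
    simpa using (abs_posLog_norm_sub_one_sub_posLog_norm_le z).trans this
  · exact abs_posLog_norm_cyclotomic_eval_sub_le_of_two_le hn z

namespace Valuation

variable {R Γ₀ : Type*} [CommRing R] [LinearOrderedCommGroupWithZero Γ₀] (v : Valuation R Γ₀)
  {p : R[X]} {x : R}

theorem map_eval_le_one (hp : ∀ i, v (p.coeff i) ≤ 1) (hx : v x ≤ 1) : v (p.eval x) ≤ 1 := by
  rw [eval_eq_sum_range]
  refine v.map_sum_le fun i _ ↦ ?_
  rw [v.map_mul, v.map_pow]
  exact mul_le_one' (hp i) (pow_le_one' hx i)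

theorem map_eval_of_one_lt (hmonic : p.Monic) (hp : ∀ i, v (p.coeff i) ≤ 1) (hx : 1 < v x) :
    v (p.eval x) = v x ^ p.natDegree := by
  have hlower : v (∑ i ∈ range p.natDegree, p.coeff i * x ^ i) < v (x ^ p.natDegree) := by
    rw [v.map_pow]
    refine v.map_sum_lt (pow_ne_zero _ (zero_lt_one.trans hx).ne') fun i hi ↦ ?_
    rw [v.map_mul, v.map_pow]
    exact (mul_le_of_le_one_left' (hp i)).trans_lt (pow_lt_pow_right₀ hx (mem_range.mp hi))
  conv_lhs => rw [hmonic.as_sum]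
  simp only [eval_add, eval_pow, eval_X, eval_finsetSum, eval_mul, eval_C]
  rw [v.map_add_eq_of_lt_left hlower, v.map_pow]

end Valuation

theorem WithZero.log_nonpos {G : Type*} [AddGroup G] [Preorder G]
    {x : WithZero (Multiplicative G)} (hx : x ≤ 1) : log x ≤ 0 := by
  obtain rfl | hx₀ := eq_or_ne x 0
  · exact log_zero.le
  · exact (log_le_iff_le_exp hx₀).mpr hx

section Height

variable {K : Type*} [Field K] [NumberField K]

theorem nuP_eq_neg_log_valuation (v : HeightOneSpectrum (𝓞 K)) (x : K) :
    nuP v x = -WithZero.log (v.valuation K x) := by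
  by_cases hx : x = 0
  · simp [nuP, hx]
  · rw [nuP, dif_neg hx, WithZero.toAdd_unzero_eq_log]

theorem max_zero_neg_nuP_cyclotomic_eval (v : HeightOneSpectrum (𝓞 K)) (γ : K) (n : ℕ) :
    max 0 (-nuP v ((cyclotomic n K).eval γ)) = φ n * max 0 (-nuP v γ) := by
  have hcoeff : ∀ i, v.valuation K ((cyclotomic n K).coeff i) ≤ 1 := fun i ↦ by
    rw [← map_cyclotomic n (algebraMap (𝓞 K) K), coeff_map]
    exact v.valuation_le_one _
  simp only [nuP_eq_neg_log_valuation, neg_neg]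
  rcases le_or_gt (v.valuation K γ) 1 with hγ | hγ
  · rw [max_eq_left (WithZero.log_nonpos hγ),
      max_eq_left (WithZero.log_nonpos ((v.valuation K).map_eval_le_one hcoeff hγ)), mul_zero]
  · rw [(v.valuation K).map_eval_of_one_lt (cyclotomic.monic n K) hcoeff hγ,
      natDegree_cyclotomic, WithZero.log_pow, nsmul_eq_mul, mul_max_of_nonneg _ _ (by positivity),
      mul_zero]

theorem abs_logHeight_sub_mul_le {x y : K} {k : ℕ} {C : ℝ}
    (hfin : ∀ v : HeightOneSpectrum (𝓞 K), max 0 (-nuP v x) = k * max 0 (-nuP v y))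
    (harch : ∀ σ : K →+* ℂ, |log⁺ ‖σ x‖ - k * log⁺ ‖σ y‖| ≤ C) :
    |logHeight x - k * logHeight y| ≤ C := by
  have hD : (0 : ℝ) < finrank ℚ K := Nat.cast_pos.mpr finrank_pos
  have hsplit : logHeight x - k * logHeight y =
      (finrank ℚ K : ℝ)⁻¹ * ∑ σ : K →+* ℂ, (log⁺ ‖σ x‖ - k * log⁺ ‖σ y‖) := by
    simp only [logHeight, ← posLog_eq_log_max_one (norm_nonneg _), hfin, Int.cast_mul,
      Int.cast_natCast, mul_assoc, ← mul_finsum, sum_sub_distrib, ← mul_sum]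
    ring
  rw [hsplit, abs_mul, abs_inv, Nat.abs_cast, inv_mul_le_iff₀ hD]
  calc _ ≤ ∑ σ : K →+* ℂ, |log⁺ ‖σ x‖ - k * log⁺ ‖σ y‖| := abs_sum_le_sum_abs _ _
    _ ≤ ∑ _σ : K →+* ℂ, C := sum_le_sum fun σ _ ↦ harch σ
    _ = finrank ℚ K * C := by rw [sum_const, card_univ, Embeddings.card, nsmul_eq_mul]

end Height

/-- **Proposition (height of cyclotomic values).** For an algebraic number `γ` and a positive
integer `n`, `|h(Φ_n(γ)) − φ(n)·h(γ)| ≤ 2^{ω(n)}·log(π·n)`. -/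
theorem height_cyclotomic_value (K : Type*) [Field K] [NumberField K]
    (γ : K) (n : ℕ) (hn : 0 < n) :
    |logHeight ((Polynomial.cyclotomic n K).eval γ) - (Nat.totient n : ℝ) * logHeight γ| ≤
      2 ^ n.primeFactors.card * Real.log (Real.pi * n) := by
  refine abs_logHeight_sub_mul_le (max_zero_neg_nuP_cyclotomic_eval · γ n) fun σ ↦ ?_
  rw [← cyclotomic.eval_apply]
  exact abs_posLog_norm_cyclotomic_eval_sub_le hn (σ γ)
end

section
/- Let γ be an algebraic number of degree 2 over ℚ with N_{ℚ(γ)/ℚ}(γ) = 1, not a root of unity, let K = ℚ(γ), and set u_m = γ^m − 1 for positive integers m. If a prime 𝔭 of K is a primitive divisor of u_n and p is the rational prime underlying 𝔭, then p ≡ 1 (mod n) or p ≡ −1 (mod n). -/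
/-!
Since `N(γ) = 1` and `[K : ℚ] = 2`, Cayley–Hamilton gives `γ² - Tr(γ) γ + 1 = 0`, i.e.
`b γ² + b = a γ` with coprime integers `a, b`. As `𝔭 ∣ γⁿ - 1`, `γ` is a `𝔭`-adic integer, and
primitivity says exactly that its residue `g` has multiplicative order `n` in the residue field,
which has characteristic `p`. Frobenius fixes `a` and `b`, so `g ^ p` is a root of
`b X² - a X + b`, whose roots are `g` and `g⁻¹`. Hence `n ∣ p - 1` or `n ∣ p + 1`.
-/

open NumberField IsDedekindDomain Module
open scoped Classical

open IsLocalRing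

theorem one_le_nuP_iff {K : Type*} [Field K] [NumberField K] (v : HeightOneSpectrum (𝓞 K))
    {x : K} : 1 ≤ nuP v x ↔ x ≠ 0 ∧ v.valuation K x < 1 := by
  by_cases hx : x = 0
  · simp [nuP, hx]
  · rw [nuP, dif_neg hx]
    conv_rhs => rw [← WithZero.coe_unzero ((v.valuation K).ne_zero_iff.mpr hx)]
    rw [← WithZero.coe_one, WithZero.coe_lt_coe, ← ofAdd_zero, ← Multiplicative.toAdd_lt,
      toAdd_ofAdd]
    simp only [ne_eq, hx, not_false_eq_true, true_and]
    omega

namespace Valuation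

variable {K Γ₀ : Type*} [Field K] [LinearOrderedCommGroupWithZero Γ₀] (v : Valuation K Γ₀)

theorem residue_eq_zero_iff (x : v.valuationSubring) :
    residue v.valuationSubring x = 0 ↔ v x < 1 := by
  rw [IsLocalRing.residue_eq_zero_iff, ValuationSubring.valuation_lt_one_iff,
    ← v.isEquiv_valuation_valuationSubring.lt_one_iff_lt_one]

theorem residue_pow_eq_one_iff (x : v.valuationSubring) (k : ℕ) :
    residue v.valuationSubring x ^ k = 1 ↔ v ((x : K) ^ k - 1) < 1 := by
  rw [← sub_eq_zero, ← map_pow, ← map_one (residue _), ← _root_.map_sub,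
    residue_eq_zero_iff]
  rfl

theorem le_one_of_pow_sub_one_lt_one {γ : K} {n : ℕ} (hn : n ≠ 0) (h : v (γ ^ n - 1) < 1) :
    v γ ≤ 1 := by
  rw [← pow_le_one_iff hn, ← map_pow, ← sub_add_cancel (γ ^ n) 1]
  exact v.map_add_le h.le v.map_one.le

theorem charP_residueField {p : ℕ} (hp : p.Prime) (h : v p < 1) :
    CharP (ResidueField v.valuationSubring) p := by
  rw [CharP.charP_iff_prime_eq_zero hp, ← map_natCast (residue _), residue_eq_zero_iff]
  simpa using h

end Valuation

theorem orderOf_eq_of_forall_lt {M N : Type*} [Monoid M] [Monoid N] {g : M} {x : N} {n : ℕ}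
    (hg : g ^ n = 1) (hx : x ^ n ≠ 1) (h : ∀ k, 0 < k → k < n → g ^ k = 1 → x ^ k = 1) :
    orderOf g = n := by
  have hn : n ≠ 0 := by rintro rfl; exact hx (pow_zero x)
  have hdvd : orderOf g ∣ n := orderOf_dvd_of_pow_eq_one hg
  have hpos : 0 < orderOf g := Nat.pos_of_dvd_of_pos hdvd (Nat.pos_of_ne_zero hn)
  refine (Nat.le_of_dvd (Nat.pos_of_ne_zero hn) hdvd).eq_or_lt.resolve_right fun hlt ↦ hx ?_
  obtain ⟨m, rfl⟩ := hdvd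
  rw [pow_mul, h _ hpos hlt (pow_orderOf_eq_one g), one_pow]

theorem modEq_one_or_modEq_neg_one_of_orderOf {G₀ : Type*} [GroupWithZero G₀] {g : G₀}
    (hg : g ≠ 0) {p : ℕ} (h : g ^ p = g ∨ g ^ p * g = 1) :
    (p : ℤ) ≡ 1 [ZMOD orderOf g] ∨ (p : ℤ) ≡ -1 [ZMOD orderOf g] := by
  rw [← Units.val_mk0 hg, orderOf_units, ← zpow_eq_zpow_iff_modEq,
    ← zpow_eq_zpow_iff_modEq, zpow_natCast, zpow_one, zpow_neg_one, eq_inv_iff_mul_eq_one]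
  simpa [Units.ext_iff] using h

theorem pow_char_eq_or_pow_char_mul_eq_one {F : Type*} [Field F] {p : ℕ} [Fact p.Prime]
    [CharP F p] {a b : ℤ} (hab : IsCoprime a b) {g : F} (hg : g ≠ 0)
    (h : (b : F) * g ^ 2 + b = a * g) : g ^ p = g ∨ g ^ p * g = 1 := by
  have hb : (b : F) ≠ 0 := by
    intro hb
    have ha : (a : F) = 0 := by simpa [hb, hg] using h.symm
    exact not_isCoprime_zero_zero (ha ▸ hb ▸ hab.intCast)
  have hfrob : (b : F) * (g ^ p) ^ 2 + b = a * g ^ p := by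
    simpa only [map_add, map_mul, map_pow, map_intCast, frobenius_def]
      using congrArg (frobenius F p) h
  have : (b : F) * ((g ^ p - g) * (g ^ p * g - 1)) = 0 := by
    linear_combination g * hfrob - g ^ p * h
  simpa [hb, sub_eq_zero] using this

open Polynomial in
theorem sq_sub_trace_mul_add_norm {R S : Type*} [CommRing R] [Nontrivial R] [CommRing S]
    [Algebra R S] (b : Basis (Fin 2) R S) (x : S) :
    x ^ 2 - algebraMap R S (Algebra.trace R S x) * x + algebraMap R S (Algebra.norm R x) = 0 := by
  apply Algebra.leftMulMatrix_injective b
  have := Matrix.aeval_self_charpoly (Algebra.leftMulMatrix b x)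
  rw [Matrix.charpoly_fin_two, ← Algebra.trace_eq_matrix_trace,
    ← Algebra.norm_eq_matrix_det] at this
  simpa [Algebra.algebraMap_eq_smul_one] using this

theorem exists_isCoprime_relation_of_norm_eq_one {K : Type*} [Field K] [Algebra ℚ K]
    (hK : finrank ℚ K = 2) {γ : K} (hnorm : Algebra.norm ℚ γ = 1) :
    ∃ a b : ℤ, IsCoprime a b ∧ (b : K) * γ ^ 2 + b = a * γ := by
  have : Module.Finite ℚ K := Module.finite_of_finrank_eq_succ hK
  have h := sq_sub_trace_mul_add_norm (finBasisOfFinrankEq ℚ K hK) γ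
  set t := Algebra.trace ℚ K γ
  refine ⟨t.num, t.den, Int.isCoprime_iff_gcd_eq_one.mpr t.reduced, ?_⟩
  have ht : (t.num : K) = algebraMap ℚ K t * t.den := by
    rw [← map_intCast (algebraMap ℚ K), ← map_natCast (algebraMap ℚ K), ← map_mul,
      Rat.mul_den_eq_num]
  rw [hnorm, map_one] at h
  push_cast
  linear_combination (t.den : K) * h - γ * ht

theorem primitive_divisor_quadratic_general (K : Type*) [Field K] [NumberField K]
    (hK : Module.finrank ℚ K = 2)
    (γ : K)
    (hnorm : Algebra.norm ℚ γ = 1)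
    (n : ℕ) (v : HeightOneSpectrum (𝓞 K))
    (p : ℕ) (hp : p.Prime) (hpv : (p : 𝓞 K) ∈ v.asIdeal)
    (hprim : 1 ≤ nuP v (γ ^ n - 1) ∧ ∀ k : ℕ, 1 ≤ k → k < n → nuP v (γ ^ k - 1) = 0) :
    Int.ModEq (n : ℤ) (p : ℤ) 1 ∨ Int.ModEq (n : ℤ) (p : ℤ) (-1) := by
  have : Fact p.Prime := ⟨hp⟩
  set w := v.valuation K
  obtain ⟨hγn, hγn_lt⟩ := (one_le_nuP_iff v).mp hprim.1
  have hn : n ≠ 0 := by rintro rfl; simp at hγn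
  let x : w.valuationSubring := ⟨γ, w.le_one_of_pow_sub_one_lt_one hn hγn_lt⟩
  set g := residue w.valuationSubring x
  have : CharP (ResidueField w.valuationSubring) p :=
    w.charP_residueField hp (by simpa using (v.valuation_lt_one_iff_mem _).mpr hpv)
  have hgn : g ^ n = 1 := (w.residue_pow_eq_one_iff x n).mpr hγn_lt
  -- As `ν_𝔭(0) = 0`, `hprim` is silent when `γ ^ k = 1`; that case is excluded via `γ ^ n ≠ 1`.
  have hord : orderOf g = n := by
    refine orderOf_eq_of_forall_lt hgn (sub_ne_zero.mp hγn) fun k hk hkn hgk ↦ ?_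
    by_contra hγk
    have := (one_le_nuP_iff v).mpr ⟨sub_ne_zero.mpr hγk, (w.residue_pow_eq_one_iff x k).mp hgk⟩
    rw [hprim.2 k hk hkn] at this
    omega
  have hg : g ≠ 0 := ne_zero_pow hn (hgn ▸ one_ne_zero)
  obtain ⟨a, b, hab, hrel⟩ := exists_isCoprime_relation_of_norm_eq_one hK hnorm
  have hrelO : (b : w.valuationSubring) * x ^ 2 + b = a * x :=
    Subtype.ext (by push_cast; exact hrel)
  have hres : (b : ResidueField w.valuationSubring) * g ^ 2 + b = a * g := by
    simpa only [map_add, map_mul, map_pow, map_intCast] using congrArg (residue _) hrelO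
  exact hord ▸ modEq_one_or_modEq_neg_one_of_orderOf hg
    (pow_char_eq_or_pow_char_mul_eq_one hab hg hres)

/-- **Proposition (primitive divisors in the quadratic norm-one case).** Let `γ` be an
algebraic number of degree 2 over `ℚ` with `N_{ℚ(γ)/ℚ}(γ) = 1`, not a root of unity, and let
`K = ℚ(γ)`. If a prime `𝔭` of `K` is a primitive divisor of `u_n = γ^n − 1` and `p` is the
rational prime underlying `𝔭`, then `p ≡ 1 (mod n)` or `p ≡ −1 (mod n)`. -/
theorem primitive_divisor_quadratic (K : Type*) [Field K] [NumberField K]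
    (hK : Module.finrank ℚ K = 2)
    (γ : K) (hγ0 : γ ≠ 0) (hgen : IntermediateField.adjoin ℚ {γ} = ⊤)
    (hnorm : Algebra.norm ℚ γ = 1)
    (hroot : ∀ m : ℕ, 0 < m → γ ^ m ≠ 1)
    (n : ℕ) (hn : 0 < n) (v : HeightOneSpectrum (𝓞 K))
    (p : ℕ) (hp : p.Prime) (hpv : (p : 𝓞 K) ∈ v.asIdeal)
    (hprim : 1 ≤ nuP v (γ ^ n - 1) ∧ ∀ k : ℕ, 1 ≤ k → k < n → nuP v (γ ^ k - 1) = 0) :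
    Int.ModEq (n : ℤ) (p : ℤ) 1 ∨ Int.ModEq (n : ℤ) (p : ℤ) (-1) :=
  primitive_divisor_quadratic_general K hK γ hnorm n v p hp hpv hprim
end
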